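/- arXiv:2012.03311 — 2 statements merged into one kernel-verified Lean document; each statement's English description precedes it below -/
import Mathlib

section
/- Let I be an ideal on ℕ such that the dual filter I* is ω-diagonalizable by I*-universal sets, and let X be a perfectly normal topological space. Then a function f : X → ℝ is the I-pointwise limit of a sequence of continuous real-valued functions on X if and only if it is the pointwise limit of a sequence of continuous real-valued functions on X (i.e. the I-Baire one class B₁^I(X) equals the Baire one class B₁(X)). -/
open Filter Topology

/-- Characteristic function identifying a subset of ℕ with a point of Cantor space. -/
noncomputable def chi (S : Set ℕ) : ℕ → Bool := fun n => @decide (n ∈ S) (Classical.dec _)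

/-- `I` is an ideal on ℕ: hereditary, closed under finite unions, contains all
finite sets, and does not contain ℕ. -/
structure IsIdeal (I : Set (Set ℕ)) : Prop where
  mem_of_subset : ∀ ⦃S T : Set ℕ⦄, S ⊆ T → T ∈ I → S ∈ I
  union_mem : ∀ ⦃S T : Set ℕ⦄, S ∈ I → T ∈ I → S ∪ T ∈ I
  finite_mem : ∀ ⦃S : Set ℕ⦄, S.Finite → S ∈ I
  univ_not_mem : Set.univ ∉ I

/-- The dual filter of an ideal. -/
def dualFilter (I : Set (Set ℕ)) : Set (Set ℕ) := {S | Sᶜ ∈ I}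

/-- A real sequence is bounded. -/
def Bdd (y : ℕ → ℝ) : Prop := ∃ M : ℝ, ∀ n, |y n| ≤ M

/-- The series ∑ₖ f k converges (its partial sums converge). -/
def SeriesConv (f : ℕ → ℝ) : Prop :=
  ∃ l : ℝ, Tendsto (fun N => ∑ k ∈ Finset.range N, f k) atTop (𝓝 l)

/-- The value of the series ∑ₖ f k (the limit of partial sums, when it exists). -/
noncomputable def seriesSum (f : ℕ → ℝ) : ℝ :=
  limUnder atTop (fun N => ∑ k ∈ Finset.range N, f k)

/-- All rows of `A` applied to `y` give convergent series: `Ay` is well defined. -/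
def RowsConv (A : ℕ → ℕ → ℝ) (y : ℕ → ℝ) : Prop := ∀ n, SeriesConv (fun k => A n k * y k)

/-- The sequence `Ay = (∑ₖ a_{n,k} y_k)ₙ`. -/
noncomputable def matMul (A : ℕ → ℕ → ℝ) (y : ℕ → ℝ) : ℕ → ℝ :=
  fun n => seriesSum (fun k => A n k * y k)

/-- `y` is `I`-convergent to `η`. -/
def IConvTo (I : Set (Set ℕ)) (y : ℕ → ℝ) (η : ℝ) : Prop :=
  ∀ ε : ℝ, 0 < ε → {n | ε < |y n - η|} ∈ I

/-- `y` is `I`-convergent. -/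
def IConv (I : Set (Set ℕ)) (y : ℕ → ℝ) : Prop := ∃ η : ℝ, IConvTo I y η

/-- `A` is a regular matrix: it maps convergent sequences to convergent sequences,
preserving limits. -/
def RegularMatrix (A : ℕ → ℕ → ℝ) : Prop :=
  ∀ (y : ℕ → ℝ) (l : ℝ), Tendsto y atTop (𝓝 l) →
    RowsConv A y ∧ Tendsto (matMul A y) atTop (𝓝 l)

/-- `A` is `(Fin, I)`-regular: it maps bounded convergent sequences to bounded
`I`-convergent sequences, preserving the limit. -/
def FinIRegular (I : Set (Set ℕ)) (A : ℕ → ℕ → ℝ) : Prop :=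
  ∀ y : ℕ → ℝ, Bdd y → ∀ l : ℝ, Tendsto y atTop (𝓝 l) →
    RowsConv A y ∧ Bdd (matMul A y) ∧ IConvTo I (matMul A y) l

/-- `S ⊆ ℕ` has asymptotic density zero. -/
noncomputable def DensityZero (S : Set ℕ) : Prop :=
  Tendsto (fun n : ℕ =>
      (((Finset.range (n + 1)).filter (fun m => @decide (m ∈ S) (Classical.dec _) = true)).card : ℝ) / n)
    atTop (𝓝 0)

/-- `y` is statistically convergent. -/
noncomputable def StatConv (y : ℕ → ℝ) : Prop :=
  ∃ η : ℝ, ∀ ε : ℝ, 0 < ε → DensityZero {n | ε < |y n - η|}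

/-- The ideal Fin × Fin, represented as an ideal on ℕ via the 2-adic valuation. -/
def FinTimesFin : Set (Set ℕ) :=
  {S | ∀ᶠ k in atTop, {n ∈ S | padicValNat 2 n = k}.Finite}

/-- `I` contains an isomorphic copy of `J`. -/
def ContainsIsoCopy (I J : Set (Set ℕ)) : Prop :=
  ∃ ι : ℕ → ℕ, Function.Injective ι ∧ ∀ S : Set ℕ, S ∈ J ↔ ι ⁻¹' S ∈ I

/-- A family of subsets of ℕ is Borel (as a subset of the Cantor space `ℕ → Bool`). -/
def BorelFamily (𝒜 : Set (Set ℕ)) : Prop := @MeasurableSet (ℕ → Bool) (borel (ℕ → Bool)) (chi '' 𝒜)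

/-- A family of subsets of ℕ is meager (as a subset of the Cantor space `ℕ → Bool`). -/
def MeagerFamily (𝒜 : Set (Set ℕ)) : Prop := IsMeagre (chi '' 𝒜)

/-- An F_σ subset of the Cantor space. -/
def IsFSigma (K : Set (ℕ → Bool)) : Prop :=
  ∃ F : ℕ → Set (ℕ → Bool), (∀ n, IsClosed (F n)) ∧ K = ⋃ n, F n

/-- A family of subsets of ℕ is F_{σδ} (as a subset of the Cantor space). -/
def FSigmaDeltaFamily (𝒜 : Set (Set ℕ)) : Prop :=
  ∃ F : ℕ → ℕ → Set (ℕ → Bool), (∀ i j, IsClosed (F i j)) ∧ chi '' 𝒜 = ⋂ i, ⋃ j, F i j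

/-- The space Σ of strictly increasing functions ℕ → ℕ, as a subspace of ℕ^ℕ. -/
abbrev MonoSeq : Type := {σ : ℕ → ℕ // StrictMono σ}

/-- The set Σ_{x,A}(I) of those σ ∈ Σ for which A σ(x) is well defined and I-convergent. -/
noncomputable def SigmaSet (x : ℕ → ℝ) (A : ℕ → ℕ → ℝ) (I : Set (Set ℕ)) : Set MonoSeq :=
  {σ | RowsConv A (fun k => x (σ.1 k)) ∧ IConv I (matMul A (fun k => x (σ.1 k)))}

/-- `I*` is ω-diagonalizable by `I*`-universal sets. -/
def OmegaDiagonalizable (I : Set (Set ℕ)) : Prop :=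
  ∃ F : ℕ → ℕ → Set ℕ,
    (∀ n k, (F n k).Finite ∧ (F n k).Nonempty) ∧
    (∀ n, ∀ A ∈ dualFilter I, ∃ k, F n k ⊆ A) ∧
    (∀ A ∈ dualFilter I, ∃ n m, ∀ k, m < k → (F n k ∩ A).Nonempty)

/-- `y` is `I`-bounded. -/
def IBounded (I : Set (Set ℕ)) (y : ℕ → ℝ) : Prop := ∃ m : ℕ, {n | (m : ℝ) ≤ |y n|} ∈ I

/-- The metric d(σ₁,σ₂) = ∑_{i ∈ Im σ₁ Δ Im σ₂} 2^{-i} on Σ. -/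
noncomputable def dSigma (σ₁ σ₂ : MonoSeq) : ℝ :=
  ∑' i : ℕ, Set.indicator (symmDiff (Set.range σ₁.1) (Set.range σ₂.1)) (fun i => (2 : ℝ)⁻¹ ^ i) i

/-!
Ordinary convergence implies `I`-convergence because `I` contains the finite sets. Conversely,
let `g n → f` `I`-pointwise and let `A ∈ I*` be the set of `j` with `|g j x - f x| ≤ ε`. By
ω-diagonalizability some row `(F n k)ₖ` meets `A` from some `k > m` on, and since that row is
`I*`-universal, some `F n k` with `k > m` lies inside `A`. Hence
`{f > a} = ⋃ p n m, ⋂ k > m, ⋃ j ∈ F n k, {g j ≥ a + 2 / (p + 1)}`, an Fσ set; likewise for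
`{f < b}`. In a perfectly normal space such a function is of the first Baire class
(Lebesgue–Hausdorff): by the reduction property, between consecutive level sets of `f` there are
sets `H` with `H` and `Hᶜ` both Fσ, their indicators are pointwise limits of Urysohn functions,
averages of these indicators approximate `f` uniformly, and the first Baire class is closed under
uniform limits. Composing with the sigmoid reduces everything to `[0, 1]`-valued functions.
-/

open Set Real

section BaireOne

variable {X : Type*} [TopologicalSpace X]

def IsFσ (s : Set X) : Prop := IsGδ sᶜ

lemma IsClosed.isFσ {s : Set X} (hs : IsClosed s) : IsFσ s := hs.isOpen_compl.isGδ

lemma IsOpen.isFσ [PerfectlyNormalSpace X] {s : Set X} (hs : IsOpen s) : IsFσ s :=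
  hs.isClosed_compl.isGδ

lemma IsFσ.inter {s t : Set X} (hs : IsFσ s) (ht : IsFσ t) : IsFσ (s ∩ t) := by
  rw [IsFσ, compl_inter]
  exact hs.union ht

lemma isFσ_iUnion {ι : Sort*} [Countable ι] {s : ι → Set X} (hs : ∀ i, IsFσ (s i)) :
    IsFσ (⋃ i, s i) := by
  rw [IsFσ, compl_iUnion]
  exact .iInter hs

lemma IsFσ.exists_eq_iUnion_isClosed {s : Set X} (hs : IsFσ s) :
    ∃ C : ℕ → Set X, (∀ n, IsClosed (C n)) ∧ s = ⋃ n, C n := by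
  obtain ⟨U, hU, hsU⟩ := isGδ_iff_eq_iInter_nat.1 hs
  exact ⟨fun n => (U n)ᶜ, fun n => (hU n).isClosed_compl,
    by rw [← compl_iInter, ← hsU, compl_compl]⟩

lemma isFσ_disjointed [PerfectlyNormalSpace X] {C : ℕ → Set X} (hC : ∀ n, IsClosed (C n))
    (n : ℕ) : IsFσ (disjointed C n) := by
  rw [disjointed_eq_inter_compl]
  exact (hC n).isFσ.inter
    (IsOpen.isFσ ((finite_Iio n).isOpen_biInter fun j _ => (hC j).isOpen_compl))

/-- The reduction property of Fσ sets. -/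
lemma IsFσ.reduction [PerfectlyNormalSpace X] {U V : Set X} (hU : IsFσ U)
    (hV : IsFσ V) (hUV : U ∪ V = univ) : ∃ H, IsFσ H ∧ IsFσ Hᶜ ∧ H ⊆ U ∧ Hᶜ ⊆ V := by
  classical
  obtain ⟨C, hC, rfl⟩ := hU.exists_eq_iUnion_isClosed
  obtain ⟨D, hD, rfl⟩ := hV.exists_eq_iUnion_isClosed
  have hCD : ∀ x, ∃ n, x ∈ C n ∪ D n := fun x => by
    have : x ∈ (⋃ n, C n) ∪ ⋃ n, D n := hUV ▸ mem_univ x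
    simpa [exists_or] using this
  -- each point is sent to the first closed piece `C n ∪ D n` containing it
  have hfirst : ∀ A : ℕ → Set X, (∀ n, IsFσ (A n)) → IsFσ {x | x ∈ A (Nat.find (hCD x))} := by
    intro A hA
    have : {x | x ∈ A (Nat.find (hCD x))} = ⋃ n, disjointed (fun n => C n ∪ D n) n ∩ A n := by
      ext x
      simp [← preimage_find_eq_disjointed _ hCD, eq_comm]
    rw [this]
    exact isFσ_iUnion fun n => (isFσ_disjointed (fun n => (hC n).union (hD n)) n).inter (hA n)
  refine ⟨{x | x ∈ C (Nat.find (hCD x))}, hfirst C fun n => (hC n).isFσ,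
    hfirst (fun n => (C n)ᶜ) fun n => (hC n).isOpen_compl.isFσ,
    fun x hx => mem_iUnion.2 ⟨_, hx⟩, fun x hx => ?_⟩
  exact mem_iUnion.2 ⟨_, (Nat.find_spec (hCD x)).resolve_left hx⟩

def IsBaireOne (f : X → ℝ) : Prop :=
  ∃ g : ℕ → X → ℝ, (∀ n, Continuous (g n)) ∧ ∀ x, Tendsto (fun n => g n x) atTop (𝓝 (f x))

lemma Continuous.isBaireOne {f : X → ℝ} (hf : Continuous f) : IsBaireOne f :=
  ⟨fun _ => f, fun _ => hf, fun _ => tendsto_const_nhds⟩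

lemma IsBaireOne.comp₂ {f g : X → ℝ} (hf : IsBaireOne f) (hg : IsBaireOne g) {φ : ℝ → ℝ → ℝ}
    (hφ : Continuous (Function.uncurry φ)) : IsBaireOne fun x => φ (f x) (g x) := by
  obtain ⟨u, hu, huf⟩ := hf
  obtain ⟨v, hv, hvg⟩ := hg
  exact ⟨fun n x => φ (u n x) (v n x), fun n => hφ.comp₂ (hu n) (hv n),
    fun x => (hφ.tendsto _).comp ((huf x).prodMk_nhds (hvg x))⟩

lemma IsBaireOne.add {f g : X → ℝ} (hf : IsBaireOne f) (hg : IsBaireOne g) :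
    IsBaireOne fun x => f x + g x :=
  hf.comp₂ hg continuous_add

lemma IsBaireOne.sub {f g : X → ℝ} (hf : IsBaireOne f) (hg : IsBaireOne g) :
    IsBaireOne fun x => f x - g x :=
  hf.comp₂ hg continuous_sub

lemma IsBaireOne.const_mul {f : X → ℝ} (hf : IsBaireOne f) (c : ℝ) :
    IsBaireOne fun x => c * f x :=
  (continuous_const (y := c)).isBaireOne.comp₂ hf continuous_mul

lemma isBaireOne_finset_sum {ι : Type*} (s : Finset ι) {f : ι → X → ℝ}
    (hf : ∀ i ∈ s, IsBaireOne (f i)) : IsBaireOne fun x => ∑ i ∈ s, f i x := by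
  classical
  induction s using Finset.induction_on with
  | empty => simpa using (continuous_const (y := (0 : ℝ))).isBaireOne
  | insert i s hi ih =>
    simp_rw [Finset.sum_insert hi]
    exact (hf i (s.mem_insert_self i)).add (ih fun j hj => hf j (Finset.mem_insert_of_mem hj))

lemma isBaireOne_indicator_one [NormalSpace X] {H : Set X} (hH : IsFσ H) (hHc : IsFσ Hᶜ) :
    IsBaireOne (H.indicator 1) := by
  obtain ⟨C, hC, hCH⟩ := hH.exists_eq_iUnion_isClosed
  obtain ⟨D, hD, hDH⟩ := hHc.exists_eq_iUnion_isClosed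
  have hclosed : ∀ {E : ℕ → Set X}, (∀ n, IsClosed (E n)) → ∀ n, IsClosed (accumulate E n) :=
    fun hE n => (finite_Iic n).isClosed_biUnion fun j _ => hE j
  have hdisj : ∀ n, Disjoint (accumulate D n) (accumulate C n) := fun n =>
    Disjoint.mono (hDH ▸ accumulate_subset_iUnion n) (hCH ▸ accumulate_subset_iUnion n)
      disjoint_compl_left
  choose w hw0 hw1 _ using fun n =>
    exists_continuous_zero_one_of_isClosed (hclosed hD n) (hclosed hC n) (hdisj n)
  refine ⟨fun n x => w n x, fun n => (w n).continuous, fun x => tendsto_nhds_of_eventually_eq ?_⟩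
  by_cases hx : x ∈ H
  · obtain ⟨j, hj⟩ := mem_iUnion.1 (hCH ▸ hx)
    filter_upwards [eventually_ge_atTop j] with n hn
    rw [indicator_of_mem hx]
    exact hw1 n (mem_accumulate.2 ⟨j, hn, hj⟩)
  · obtain ⟨j, hj⟩ := mem_iUnion.1 (hDH ▸ mem_compl hx)
    filter_upwards [eventually_ge_atTop j] with n hn
    rw [indicator_of_notMem hx]
    exact hw0 n (mem_accumulate.2 ⟨j, hn, hj⟩)

lemma IsBaireOne.tsum {h : ℕ → X → ℝ} {b : ℕ → ℝ} (hh : ∀ p, IsBaireOne (h p)) (hb : Summable b)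
    (hhb : ∀ p x, |h p x| ≤ b p) : IsBaireOne fun x => ∑' p, h p x := by
  choose v hv hvh using hh
  -- clamping the approximants to `[-b p, b p]` keeps them dominated by the summable `b`
  set θ : ℕ → ℕ → X → ℝ := fun p n x => max (-b p) (min (v p n x) (b p))
  have hθb : ∀ p n x, ‖θ p n x‖ ≤ b p := fun p n x =>
    abs_le.2 ⟨le_max_left _ _,
      max_le (by linarith [abs_nonneg (h p x), hhb p x]) (min_le_right _ _)⟩
  have hθh : ∀ p x, Tendsto (fun n => θ p n x) atTop (𝓝 (h p x)) := fun p x => by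
    have hlim := (tendsto_const_nhds (x := -b p)).max
      ((hvh p x).min (tendsto_const_nhds (x := b p)))
    rwa [min_eq_left (abs_le.1 (hhb p x)).2, max_eq_right (abs_le.1 (hhb p x)).1] at hlim
  exact ⟨fun n x => ∑' p, θ p n x,
    fun n => continuous_tsum (fun p => continuous_const.max ((hv p n).min continuous_const)) hb
      fun p x => hθb p n x,
    fun x => tendsto_tsum_of_dominated_convergence hb (fun p => hθh p x)
      (.of_forall fun n p => hθb p n x)⟩

lemma isBaireOne_of_forall_exists_dist_le {f : X → ℝ}
    (h : ∀ ε > 0, ∃ g, IsBaireOne g ∧ ∀ x, dist (g x) (f x) ≤ ε) : IsBaireOne f := by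
  choose g hg hgf using fun p : ℕ => h ((1 / 2) ^ p) (by positivity)
  have hstep : ∀ p x, |g (p + 1) x - g p x| ≤ 2 * (1 / 2) ^ p := fun p x => by
    have := dist_triangle_right (g (p + 1) x) (g p x) (f x)
    rw [Real.dist_eq] at this
    have hp1 := hgf (p + 1) x
    rw [pow_succ] at hp1
    linarith [hgf p x, pow_nonneg (by norm_num : (0 : ℝ) ≤ 1 / 2) p]
  have htel : ∀ x, f x = g 0 x + ∑' p, (g (p + 1) x - g p x) := fun x => by
    have hsum : Summable fun p => ‖g (p + 1) x - g p x‖ :=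
      .of_nonneg_of_le (fun _ => norm_nonneg _) (fun p => hstep p x)
        (summable_geometric_two.mul_left 2)
    have hlim : Tendsto (fun n => g n x) atTop (𝓝 (f x)) :=
      tendsto_iff_dist_tendsto_zero.2 <| squeeze_zero (fun _ => dist_nonneg) (fun n => hgf n x)
        (tendsto_pow_atTop_nhds_zero_of_lt_one (by norm_num) (by norm_num))
    have hhas : HasSum (fun p => g (p + 1) x - g p x) (f x - g 0 x) :=
      (hasSum_iff_tendsto_nat_of_summable_norm hsum).2 <| by
        simpa only [Finset.sum_range_sub (fun i => g i x)] using hlim.sub_const (g 0 x)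
    rw [hhas.tsum_eq]
    ring
  simpa only [← htel] using
    (hg 0).add (.tsum (fun p => (hg (p + 1)).sub (hg p)) (summable_geometric_two.mul_left 2) hstep)

lemma IsBaireOne.continuousOn_comp {u : X → ℝ} (hu : IsBaireOne u) (hu01 : ∀ x, u x ∈ Ioo 0 1)
    {φ : ℝ → ℝ} (hφ : ContinuousOn φ (Ioo 0 1)) : IsBaireOne (φ ∘ u) := by
  obtain ⟨v, hv, hvu⟩ := hu
  -- the approximants are pushed into `[c n, 1 - c n] ⊆ (0, 1)`, where `φ` is continuous
  set c : ℕ → ℝ := fun n => 1 / ((n : ℝ) + 1) / 3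
  have hc : ∀ n, 0 < c n ∧ c n < 1 / 2 := fun n => by
    have : 1 / ((n : ℝ) + 1) ≤ 1 := by
      rw [div_le_one (by positivity)]
      linarith [(Nat.cast_nonneg n : (0 : ℝ) ≤ n)]
    exact ⟨by positivity, by simp only [c]; linarith⟩
  have hc0 : Tendsto c atTop (𝓝 0) := by
    simpa [c] using (tendsto_one_div_add_atTop_nhds_zero_nat (𝕜 := ℝ)).div_const 3
  set w : ℕ → X → ℝ := fun n x => max (c n) (min (v n x) (1 - c n))
  have hw : ∀ n x, w n x ∈ Ioo 0 1 := fun n x =>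
    ⟨(hc n).1.trans_le (le_max_left _ _),
      max_lt (by linarith [hc n]) ((min_le_right _ _).trans_lt (by linarith [hc n]))⟩
  refine ⟨fun n x => φ (w n x), fun n => hφ.comp_continuous
    (continuous_const.max ((hv n).min continuous_const)) (hw n), fun x => ?_⟩
  have hwu : Tendsto (fun n => w n x) atTop (𝓝 (u x)) := by
    have hlim := hc0.max ((hvu x).min ((tendsto_const_nhds (x := (1 : ℝ))).sub hc0))
    rwa [sub_zero, min_eq_left (hu01 x).2.le, max_eq_right (hu01 x).1.le] at hlim
  exact ((hφ.continuousAt (Ioo_mem_nhds (hu01 x).1 (hu01 x).2)).tendsto).comp hwu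

lemma abs_sum_range_sub_le_one {N : ℕ} {y : ℝ} (hy0 : 0 ≤ y) (hyN : y ≤ N) {e : ℕ → ℝ}
    (hlo : ∀ j : ℕ, (if (j : ℝ) + 1 ≤ y then 1 else 0) ≤ e j)
    (hhi : ∀ j : ℕ, e j ≤ if (j : ℝ) < y then 1 else 0) : |∑ j ∈ Finset.range N, e j - y| ≤ 1 := by
  have hfloor : ∑ j ∈ Finset.range N, (if (j : ℝ) + 1 ≤ y then 1 else 0 : ℝ) = ⌊y⌋₊ := by
    rw [Finset.sum_boole, ← Finset.card_range ⌊y⌋₊]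
    congr 2
    ext j
    have hj : j < ⌊y⌋₊ ↔ (j : ℝ) + 1 ≤ y := by
      rw [Nat.lt_iff_add_one_le, Nat.le_floor_iff hy0]
      push_cast
      rfl
    have := Nat.floor_le_of_le hyN
    simp only [Finset.mem_filter, Finset.mem_range, ← hj]
    omega
  have hceil : ∑ j ∈ Finset.range N, (if (j : ℝ) < y then 1 else 0 : ℝ) = ⌈y⌉₊ := by
    rw [Finset.sum_boole, ← Finset.card_range ⌈y⌉₊]
    congr 2
    ext j
    have := Nat.ceil_le.2 hyN
    simp only [Finset.mem_filter, Finset.mem_range, ← Nat.lt_ceil]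
    omega
  have hlow := Finset.sum_le_sum fun j (_ : j ∈ Finset.range N) => hlo j
  have hhigh := Finset.sum_le_sum fun j (_ : j ∈ Finset.range N) => hhi j
  rw [hfloor] at hlow
  rw [hceil] at hhigh
  rw [abs_le]
  constructor <;> linarith [Nat.sub_one_lt_floor y, Nat.ceil_lt_add_one hy0]

/-- The Lebesgue–Hausdorff theorem, for `[0, 1]`-valued functions. -/
lemma isBaireOne_of_isFσ_setOf_lt [PerfectlyNormalSpace X] {f : X → ℝ}
    (hf : ∀ x, f x ∈ Icc 0 1) (hgt : ∀ a, IsFσ {x | a < f x}) (hlt : ∀ b, IsFσ {x | f x < b}) :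
    IsBaireOne f := by
  refine isBaireOne_of_forall_exists_dist_le fun ε hε => ?_
  obtain ⟨N, hN⟩ := exists_nat_one_div_lt hε
  have hN0 : (0 : ℝ) < N + 1 := by positivity
  have hsep : ∀ j : ℕ, ∃ H, IsFσ H ∧ IsFσ Hᶜ ∧ H ⊆ {x | j / (N + 1 : ℝ) < f x} ∧
      Hᶜ ⊆ {x | f x < (j + 1) / (N + 1 : ℝ)} := fun j =>
    IsFσ.reduction (hgt _) (hlt _) <| eq_univ_of_forall fun x =>
      (lt_or_ge _ (f x)).imp id fun h => h.trans_lt (div_lt_div_of_pos_right (by linarith) hN0)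
  choose H hH hHc hHU hHV using hsep
  refine ⟨fun x => 1 / (N + 1 : ℝ) * ∑ j ∈ Finset.range (N + 1), (H j).indicator 1 x,
    (isBaireOne_finset_sum _ fun j _ => isBaireOne_indicator_one (hH j) (hHc j)).const_mul _,
    fun x => ?_⟩
  have hcount : |∑ j ∈ Finset.range (N + 1), (H j).indicator 1 x - (N + 1) * f x| ≤ 1 := by
    refine abs_sum_range_sub_le_one (by nlinarith [(hf x).1]) (by push_cast; nlinarith [(hf x).2])
      (fun j => ?_) (fun j => ?_)
    · by_cases hx : x ∈ H j
      · simp only [indicator_of_mem hx, Pi.one_apply]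
        split_ifs <;> norm_num
      · have h : f x < (j + 1) / (N + 1 : ℝ) := hHV j hx
        rw [lt_div_iff₀ hN0] at h
        rw [if_neg (by linarith), indicator_of_notMem hx]
    · by_cases hx : x ∈ H j
      · have h : j / (N + 1 : ℝ) < f x := hHU j hx
        rw [div_lt_iff₀ hN0] at h
        rw [if_pos (by linarith), indicator_of_mem hx, Pi.one_apply]
      · simp only [indicator_of_notMem hx]
        split_ifs <;> norm_num
  have hrw : 1 / (N + 1 : ℝ) * ∑ j ∈ Finset.range (N + 1), (H j).indicator 1 x - f x =
      1 / (N + 1) * (∑ j ∈ Finset.range (N + 1), (H j).indicator 1 x - (N + 1) * f x) := by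
    field_simp
  rw [Real.dist_eq, hrw, abs_mul, abs_of_pos (by positivity)]
  calc _ ≤ 1 / (N + 1 : ℝ) * 1 := by gcongr
    _ ≤ ε := by linarith

end BaireOne

section IdealConvergence

variable {I : Set (Set ℕ)}

lemma iConvTo_of_tendsto (hI : IsIdeal I) {y : ℕ → ℝ} {η : ℝ} (h : Tendsto y atTop (𝓝 η)) :
    IConvTo I y η := fun ε hε => hI.finite_mem <| by
  have h' : ∀ᶠ n in cofinite, dist (y n) η ≤ ε :=
    Nat.cofinite_eq_atTop ▸ (Metric.tendsto_nhds.1 h ε hε).mono fun _ => le_of_lt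
  simpa [Real.dist_eq] using h'

lemma IConvTo.comp (hI : IsIdeal I) {y : ℕ → ℝ} {η : ℝ} (h : IConvTo I y η) {φ : ℝ → ℝ}
    (hφ : ContinuousAt φ η) : IConvTo I (fun n => φ (y n)) (φ η) := by
  intro ε hε
  obtain ⟨δ, hδ, hφδ⟩ := Metric.continuousAt_iff.1 hφ ε hε
  refine hI.mem_of_subset (fun n hn => ?_) (h (δ / 2) (half_pos hδ))
  by_contra hn'
  have := hφδ (show dist (y n) η < δ by rw [Real.dist_eq]; simp at hn'; linarith)
  rw [Real.dist_eq] at this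
  exact absurd hn (not_lt.2 this.le)

lemma IConvTo.setOf_abs_sub_le_mem_dualFilter {y : ℕ → ℝ} {η : ℝ} (h : IConvTo I y η) {ε : ℝ}
    (hε : 0 < ε) : {n | |y n - η| ≤ ε} ∈ dualFilter I := by
  simpa [dualFilter, compl_ofPred, not_le] using h ε hε

lemma IsIdeal.diff_mem_dualFilter (hI : IsIdeal I) {A S : Set ℕ} (hA : A ∈ dualFilter I)
    (hS : S.Finite) : A \ S ∈ dualFilter I := by
  simpa [dualFilter, sdiff_eq, compl_inter] using hI.union_mem hA (hI.finite_mem hS)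

lemma IsIdeal.exists_lt_subset_of_universal (hI : IsIdeal I) {F : ℕ → Set ℕ}
    (hF : ∀ k, (F k).Finite ∧ (F k).Nonempty) (huniv : ∀ A ∈ dualFilter I, ∃ k, F k ⊆ A) (m : ℕ)
    {A : Set ℕ} (hA : A ∈ dualFilter I) : ∃ k, m < k ∧ F k ⊆ A := by
  obtain ⟨k, hk⟩ :=
    huniv _ (hI.diff_mem_dualFilter hA ((finite_le_nat m).biUnion fun k _ => (hF k).1))
  refine ⟨k, lt_of_not_ge fun hkm => ?_, hk.trans sdiff_subset⟩
  obtain ⟨j, hj⟩ := (hF k).2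
  exact (hk hj).2 (mem_biUnion hkm hj)

lemma isFσ_setOf_lt_of_iConvTo {X : Type*} [TopologicalSpace X] (hI : IsIdeal I)
    (hdiag : OmegaDiagonalizable I) {g : ℕ → X → ℝ} (hg : ∀ n, Continuous (g n)) {f : X → ℝ}
    (hf : ∀ x, IConvTo I (fun n => g n x) (f x)) (a : ℝ) : IsFσ {x | a < f x} := by
  obtain ⟨F, hF, huniv, hdiag⟩ := hdiag
  set C : ℕ → ℕ → ℕ → Set X := fun p n m =>
    ⋂ k > m, ⋃ j ∈ F n k, {x | a + 2 * (1 / (p + 1)) ≤ g j x}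
  suffices {x | a < f x} = ⋃ p, ⋃ n, ⋃ m, C p n m by
    rw [this]
    exact isFσ_iUnion fun p => isFσ_iUnion fun n => isFσ_iUnion fun m => IsClosed.isFσ <|
      isClosed_biInter fun k _ => (hF n k).1.isClosed_biUnion fun j _ =>
        isClosed_le continuous_const (hg j)
  ext x
  simp only [C, mem_ofPred_eq, mem_iUnion, mem_iInter]
  constructor
  · intro hx
    obtain ⟨p, hp⟩ := exists_nat_one_div_lt (show 0 < (f x - a) / 3 by linarith)
    obtain ⟨n, m, hnm⟩ :=
      hdiag _ ((hf x).setOf_abs_sub_le_mem_dualFilter (ε := 1 / (p + 1)) (by positivity))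
    refine ⟨p, n, m, fun k hk => ?_⟩
    obtain ⟨j, hjF, hj⟩ := hnm k hk
    have hj' : |g j x - f x| ≤ 1 / (p + 1) := hj
    exact ⟨j, hjF, by linarith [(abs_le.1 hj').1]⟩
  · rintro ⟨p, n, m, hx⟩
    by_contra hfa
    obtain ⟨k, hmk, hkA⟩ := hI.exists_lt_subset_of_universal (hF n) (huniv n) m
      ((hf x).setOf_abs_sub_le_mem_dualFilter (ε := 1 / (p + 1)) (by positivity))
    obtain ⟨j, hjF, hj⟩ := hx k hmk
    have hj' : |g j x - f x| ≤ 1 / (p + 1) := hkA hjF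
    have : (0 : ℝ) < 1 / (p + 1) := by positivity
    linarith [(abs_le.1 hj').2]

end IdealConvergence

lemma log_sigmoid_div_one_sub_sigmoid (t : ℝ) : log (sigmoid t / (1 - sigmoid t)) = t := by
  rw [← sigmoid_neg, ← sigmoid_mul_rexp_neg, div_mul_cancel_left₀ (sigmoid_pos t).ne', ← exp_neg,
    neg_neg, log_exp]

lemma continuousOn_log_div_one_sub : ContinuousOn (fun s : ℝ => log (s / (1 - s))) (Ioo 0 1) :=
  ContinuousOn.log (continuousOn_id.div (continuousOn_const.sub continuousOn_id)
    fun s hs => by linarith [hs.2]) fun s hs => by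
      have : 0 < 1 - s := by linarith [hs.2]
      exact (div_pos hs.1 this).ne'

theorem isBaireOne_of_iConvTo {I : Set (Set ℕ)} {X : Type*} [TopologicalSpace X]
    [PerfectlyNormalSpace X] (hI : IsIdeal I) (hdiag : OmegaDiagonalizable I) {g : ℕ → X → ℝ}
    (hg : ∀ n, Continuous (g n)) {f : X → ℝ} (hf : ∀ x, IConvTo I (fun n => g n x) (f x)) :
    IsBaireOne f := by
  have hσg : ∀ n, Continuous fun x => sigmoid (g n x) := fun n => continuous_sigmoid.comp (hg n)
  have hσf : ∀ x, IConvTo I (fun n => sigmoid (g n x)) (sigmoid (f x)) := fun x =>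
    (hf x).comp hI continuous_sigmoid.continuousAt
  have hσ : IsBaireOne (sigmoid ∘ f) := by
    refine isBaireOne_of_isFσ_setOf_lt (fun x => ⟨(sigmoid_pos _).le, (sigmoid_lt_one _).le⟩)
      (isFσ_setOf_lt_of_iConvTo hI hdiag hσg hσf) fun b => ?_
    simpa using isFσ_setOf_lt_of_iConvTo hI hdiag (fun n => (hσg n).neg)
      (fun x => (hσf x).comp hI (φ := fun t => -t) continuous_neg.continuousAt) (-b)
  simpa [Function.comp_def, log_sigmoid_div_one_sub_sigmoid] using
    hσ.continuousOn_comp (fun x => ⟨sigmoid_pos _, sigmoid_lt_one _⟩) continuousOn_log_div_one_sub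

/-- If `I*` is ω-diagonalizable by `I*`-universal sets and `X` is a perfectly
normal space, then a function `f : X → ℝ` is an I-pointwise limit of continuous functions
iff it is a pointwise limit of continuous functions: B₁^I(X) = B₁(X). -/
theorem stmt_18 (I : Set (Set ℕ)) (hI : IsIdeal I) (hdiag : OmegaDiagonalizable I)
    (X : Type*) [TopologicalSpace X] [PerfectlyNormalSpace X] (f : X → ℝ) :
    (∃ g : ℕ → X → ℝ, (∀ n, Continuous (g n)) ∧
        ∀ x : X, IConvTo I (fun n => g n x) (f x)) ↔
    (∃ g : ℕ → X → ℝ, (∀ n, Continuous (g n)) ∧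
        ∀ x : X, Tendsto (fun n => g n x) atTop (𝓝 (f x))) :=
  ⟨fun ⟨_, hg, hf⟩ => isBaireOne_of_iConvTo hI hdiag hg hf,
    fun ⟨g, hg, hf⟩ => ⟨g, hg, fun x => iConvTo_of_tendsto hI (hf x)⟩⟩
end

section
/- Let I be an ideal on ℕ. Then the following are equivalent: (i) I is meager as a subset of P(ℕ) with the Cantor-space topology; (ii) there exists a strictly increasing function σ : ℕ → ℕ such that every set A ⊆ ℕ containing the interval ℕ ∩ [σ(n), σ(n+1)) for infinitely many n does not belong to I; (iii) there exists a sequence (F_n) of closed subsets of P(ℕ) such that I ⊆ ⋃_n F_n and F_n ∩ Fin* = ∅ for all n, where Fin* is the Fréchet filter of cofinite subsets of ℕ. -/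
open Filter Topology

/-!
A meagre subset `M` of the Cantor space misses a dense Gδ set, hence lies outside a decreasing
sequence of dense open sets `V n`. Since there are only finitely many prefixes of length `a`, they
can be extended one after another, so that `V n` contains every point following one fixed pattern
on some block `[a, b)`. Iterating produces blocks `[σ n, σ (n + 1))` with patterns `w n` such that
no point of `M` follows infinitely many of them. If `S ∈ I` contained infinitely many blocks,
cutting `S` down to the patterns on those blocks would give a subset of `S`, still in `I`, that
follows infinitely many patterns.

Conversely, the sets "misses a point of every block from the `N`-th on" are closed, cover `I` and
avoid the cofinite sets; a closed set avoiding the dense set of cofinite sets is nowhere dense.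
-/

open PiNat Set

section Cylinders

variable {α : Type*} [TopologicalSpace α] [DiscreteTopology α] {U : Set (ℕ → α)}

theorem PiNat.exists_cylinder_subset (hU : IsOpen U) {x : ℕ → α} (hx : x ∈ U) :
    ∃ n, cylinder x n ⊆ U := by
  obtain ⟨_, ⟨y, n, rfl⟩, hxy, hyU⟩ :=
    (isTopologicalBasis_cylinders fun _ => α).exists_subset_of_mem_open hx hU
  exact ⟨n, mem_cylinder_iff_eq.1 hxy ▸ hyU⟩

theorem PiNat.exists_cylinder_subset_of_dense (hU : IsOpen U) (hd : Dense U) (y : ℕ → α)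
    (a : ℕ) : ∃ b, a < b ∧ ∃ z ∈ cylinder y a, cylinder z b ⊆ U := by
  obtain ⟨z, hzU, hzy⟩ := hd.exists_mem_open (isOpen_cylinder _ y a) ⟨y, self_mem_cylinder y a⟩
  obtain ⟨n, hn⟩ := exists_cylinder_subset hU hzU
  exact ⟨max n (a + 1), by omega, z, hzy, (cylinder_anti z (le_max_left _ _)).trans hn⟩

variable [Nonempty α]

theorem PiNat.exists_block_of_finset (hU : IsOpen U) (hd : Dense U) (P : Finset (ℕ → α))
    (a : ℕ) : ∃ b, a < b ∧ ∃ w : ℕ → α,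
      ∀ u ∈ P, ∀ x ∈ cylinder u a, (∀ i ∈ Ico a b, x i = w i) → x ∈ U := by
  classical
  induction P using Finset.induction_on with
  | empty => exact ⟨a + 1, by omega, Classical.arbitrary _, by simp⟩
  | insert u P _ ih =>
    obtain ⟨b, hab, w, hw⟩ := ih
    obtain ⟨b', hbb', z, hz, hzU⟩ :=
      exists_cylinder_subset_of_dense hU hd (fun i => if i < a then u i else w i) b
    refine ⟨b', hab.trans hbb', z, ?_⟩
    rintro v hv x hx hxz
    rcases Finset.mem_insert.1 hv with rfl | hv
    · refine hzU fun i hi => ?_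
      rcases lt_or_ge i a with hia | hia
      · rw [hx i hia, hz i (hia.trans hab)]
        simp [hia]
      · exact hxz i ⟨hia, hi⟩
    · refine hw v hv x hx fun i hi => ?_
      rw [hxz i ⟨hi.1, hi.2.trans hbb'⟩, hz i hi.2]
      simp [not_lt.2 hi.1]

theorem PiNat.exists_block [Finite α] (hU : IsOpen U) (hd : Dense U) (a : ℕ) :
    ∃ b, a < b ∧ ∃ w : ℕ → α, ∀ x, (∀ i ∈ Ico a b, x i = w i) → x ∈ U := by
  let extend (v : Fin a → α) : ℕ → α := fun i =>
    if h : i < a then v ⟨i, h⟩ else Classical.arbitrary α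
  obtain ⟨b, hab, w, hw⟩ := exists_block_of_finset hU hd (finite_range extend).toFinset a
  exact ⟨b, hab, w, fun x => hw (extend fun j => x j) (by simp) x fun i hi => by simp [extend, hi]⟩

end Cylinders

theorem IsMeagre.exists_blocks {α : Type*} [TopologicalSpace α] [DiscreteTopology α]
    [Finite α] [Nonempty α] {M : Set (ℕ → α)} (hM : IsMeagre M) :
    ∃ σ : ℕ → ℕ, StrictMono σ ∧ ∃ w : ℕ → ℕ → α, ∀ x,
      (∃ᶠ n in atTop, ∀ i ∈ Ico (σ n) (σ (n + 1)), x i = w n i) → x ∉ M := by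
  obtain ⟨t, htM, htG, htd⟩ := mem_residual.1 hM
  obtain ⟨U, hUo, rfl⟩ := htG.eq_iInter_nat
  have hV : ∀ n, IsOpen (⋂ m ∈ Iic n, U m) ∧ Dense (⋂ m ∈ Iic n, U m) := fun n =>
    ⟨(finite_Iic n).isOpen_biInter fun m _ => hUo m,
      htd.mono fun x hx => mem_iInter₂.2 fun m _ => mem_iInter.1 hx m⟩
  choose b hab w hw using fun n => exists_block (hV n).1 (hV n).2
  let σ : ℕ → ℕ := fun n => Nat.rec 0 (fun n s => b n s) n
  refine ⟨σ, strictMono_nat_of_lt_succ fun n => hab n (σ n), fun n => w n (σ n),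
    fun x hx hxM => ?_⟩
  obtain ⟨m, hm⟩ : ∃ m, x ∉ U m := by simpa using fun h => htM h hxM
  obtain ⟨n, hn, hmn⟩ := (hx.and_eventually (eventually_ge_atTop m)).exists
  exact hm (mem_iInter₂.1 (hw n (σ n) x hn) m hmn)

@[simp]
theorem chi_apply_eq_true {S : Set ℕ} {n : ℕ} : chi S n = true ↔ n ∈ S := by
  simp [chi]

@[simp]
theorem chi_apply_eq_false {S : Set ℕ} {n : ℕ} : chi S n = false ↔ n ∉ S := by
  simp [chi]

theorem dense_chi_image_cofinite : Dense (chi '' {S : Set ℕ | Sᶜ.Finite}) := by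
  refine (isTopologicalBasis_cylinders fun _ => Bool).dense_iff.2 ?_
  rintro _ ⟨x, n, rfl⟩ -
  refine ⟨chi {i | n ≤ i ∨ x i = true}, fun i hi => ?_, _, ?_, rfl⟩
  · cases h : x i <;> simp [h, hi]
  · exact (finite_Iio n).subset fun i hi => by simp_all

theorem exists_strictMono_forall_notMem_of_meagerFamily {I : Set (Set ℕ)} (hI : IsLowerSet I)
    (hM : MeagerFamily I) : ∃ σ : ℕ → ℕ, StrictMono σ ∧ ∀ S : Set ℕ,
      (∃ᶠ n in atTop, Ico (σ n) (σ (n + 1)) ⊆ S) → S ∉ I := by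
  obtain ⟨σ, hσ, w, hw⟩ := hM.exists_blocks
  refine ⟨σ, hσ, fun S hS hSI => ?_⟩
  let S' := {i ∈ S | ∀ n, i ∈ Ico (σ n) (σ (n + 1)) → w n i = true}
  refine hw (chi S') (hS.mono fun n hn i hi => ?_) ⟨S', hI (sep_subset _ _) hSI, rfl⟩
  cases h : w n i
  · exact chi_apply_eq_false.2 fun hi' => by simpa [h] using hi'.2 n hi
  · refine chi_apply_eq_true.2 ⟨hn hi, fun m hm => ?_⟩
    obtain rfl : m = n := by
      by_contra hmn
      exact disjoint_left.1 (hσ.monotone.pairwise_disjoint_on_Ico_succ hmn) hm hi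
    exact h

theorem exists_isClosed_cover_of_strictMono {I : Set (Set ℕ)} {σ : ℕ → ℕ} (hσ : StrictMono σ)
    (hI : ∀ S : Set ℕ, (∃ᶠ n in atTop, Ico (σ n) (σ (n + 1)) ⊆ S) → S ∉ I) :
    ∃ F : ℕ → Set (ℕ → Bool), (∀ n, IsClosed (F n)) ∧ (chi '' I ⊆ ⋃ n, F n) ∧
      ∀ n, F n ∩ chi '' {S : Set ℕ | Sᶜ.Finite} = ∅ := by
  refine ⟨fun N => ⋂ m ≥ N, ⋃ k ∈ Ico (σ m) (σ (m + 1)), {x | x k = false}, fun N => ?_, ?_, ?_⟩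
  · exact isClosed_biInter fun m _ => (finite_Ico _ _).isClosed_biUnion fun k _ =>
      isClosed_eq (continuous_apply k) continuous_const
  · rintro _ ⟨S, hS, rfl⟩
    obtain ⟨N, hN⟩ := eventually_atTop.1 (not_frequently.1 fun h => hI S h hS)
    refine mem_iUnion.2 ⟨N, mem_iInter₂.2 fun m hm => ?_⟩
    obtain ⟨k, hk, hkS⟩ := not_subset.1 (hN m hm)
    exact mem_iUnion₂.2 ⟨k, hk, chi_apply_eq_false.2 hkS⟩
  · refine fun N => eq_empty_of_forall_notMem ?_
    rintro _ ⟨hF, S, hS, rfl⟩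
    obtain ⟨c, hc⟩ := hS.bddAbove
    obtain ⟨k, hk, hkS⟩ := mem_iUnion₂.1 (mem_iInter₂.1 hF (max N (c + 1)) (le_max_left _ _))
    have hσN : max N (c + 1) ≤ σ (max N (c + 1)) := hσ.le_apply
    have hkc : k ≤ c := hc (chi_apply_eq_false.1 hkS)
    simp only [mem_Ico] at hk
    omega

theorem meagerFamily_of_isClosed_cover {I : Set (Set ℕ)} {F : ℕ → Set (ℕ → Bool)}
    (hF : ∀ n, IsClosed (F n)) (hIF : chi '' I ⊆ ⋃ n, F n)
    (hFcof : ∀ n, F n ∩ chi '' {S : Set ℕ | Sᶜ.Finite} = ∅) : MeagerFamily I := by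
  refine IsMeagre.mono hIF (isMeagre_iUnion fun n => IsNowhereDense.isMeagre ?_)
  refine (hF n).isNowhereDense_iff.2 (interior_eq_empty_iff_dense_compl.2 ?_)
  exact dense_chi_image_cofinite.mono fun x hx hxF => (hFcof n).subset ⟨hxF, hx⟩

/-- Talagrand's characterization of meager ideals: `I` is meager iff there is
a strictly increasing σ such that any set containing infinitely many of the intervals
[σ(n), σ(n+1)) is not in `I`, iff `I` is F_σ-separated from the Fréchet filter. -/
theorem stmt_19 (I : Set (Set ℕ)) (hI : IsIdeal I) :
    (MeagerFamily I ↔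
      ∃ σ : ℕ → ℕ, StrictMono σ ∧ ∀ S : Set ℕ,
        (∃ᶠ n in atTop, Set.Ico (σ n) (σ (n + 1)) ⊆ S) → S ∉ I) ∧
    ((∃ σ : ℕ → ℕ, StrictMono σ ∧ ∀ S : Set ℕ,
        (∃ᶠ n in atTop, Set.Ico (σ n) (σ (n + 1)) ⊆ S) → S ∉ I) ↔
      ∃ F : ℕ → Set (ℕ → Bool), (∀ n, IsClosed (F n)) ∧ (chi '' I ⊆ ⋃ n, F n) ∧
        ∀ n, F n ∩ chi '' {S : Set ℕ | Sᶜ.Finite} = ∅) := by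
  have hblocks := exists_strictMono_forall_notMem_of_meagerFamily fun _ _ h => hI.mem_of_subset h
  constructor
  · refine ⟨hblocks, ?_⟩
    rintro ⟨σ, hσ, hσI⟩
    obtain ⟨F, hF, hIF, hFcof⟩ := exists_isClosed_cover_of_strictMono hσ hσI
    exact meagerFamily_of_isClosed_cover hF hIF hFcof
  · constructor
    · rintro ⟨σ, hσ, hσI⟩
      exact exists_isClosed_cover_of_strictMono hσ hσI
    · rintro ⟨F, hF, hIF, hFcof⟩
      exact hblocks (meagerFamily_of_isClosed_cover hF hIF hFcof)
end
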